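/- arXiv:2512.15496 — 5 statements merged into one kernel-verified Lean document; each statement's English description precedes it below -/
import Mathlib

section
/- Let M be an image-finite Kripke model (every world has finitely many R-successors) and Λ a restorative similarity type. Define S on the worlds of M by S w v iff every Λ-language formula true at w is true at v (subsumption). Then S satisfies the simulation condition (Sim⌣): if S w v and w R s, then there exists t with v R t and S t s. (Here ⌣ ∈ Λ is assumed.) -/
inductive Op : Type
  | smile
  | frown
  | cons
  | det
  | incons
  | undet
  deriving DecidableEq

inductive Fm (K : Type) : Type
  | prop (k : K)
  | top
  | bot
  | and (a b : Fm K)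
  | or (a b : Fm K)
  | smile (a : Fm K)
  | frown (a : Fm K)
  | cons (a : Fm K)
  | det (a : Fm K)
  | incons (a : Fm K)
  | undet (a : Fm K)

def Sat {W K : Type} (R : W → W → Prop) (P : K → W → Prop) : W → Fm K → Prop
  | w, .prop k => P k w
  | _, .top => True
  | _, .bot => False
  | w, .and a b => Sat R P w a ∧ Sat R P w b
  | w, .or a b => Sat R P w a ∨ Sat R P w b
  | w, .smile a => ∃ v, R w v ∧ ¬ Sat R P v a
  | w, .frown a => ∀ v, R w v → ¬ Sat R P v a
  | w, .cons a => ¬ Sat R P w a ∨ ∀ v, R w v → Sat R P v a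
  | w, .det a => Sat R P w a ∨ ∀ v, R w v → ¬ Sat R P v a
  | w, .incons a => Sat R P w a ∧ ∃ v, R w v ∧ ¬ Sat R P v a
  | w, .undet a => ¬ Sat R P w a ∧ ∃ v, R w v ∧ Sat R P v a

/-- `InLang Λ φ` says that `φ` uses only modal operators from `Λ`. -/
def InLang {K : Type} (Λ : Set Op) : Fm K → Prop
  | .prop _ => True
  | .top => True
  | .bot => True
  | .and a b => InLang Λ a ∧ InLang Λ b
  | .or a b => InLang Λ a ∧ InLang Λ b
  | .smile a => Op.smile ∈ Λ ∧ InLang Λ a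
  | .frown a => Op.frown ∈ Λ ∧ InLang Λ a
  | .cons a => Op.cons ∈ Λ ∧ InLang Λ a
  | .det a => Op.det ∈ Λ ∧ InLang Λ a
  | .incons a => Op.incons ∈ Λ ∧ InLang Λ a
  | .undet a => Op.undet ∈ Λ ∧ InLang Λ a

theorem stmt12 {W K : Type} (Λ : Set Op)
    (R : W → W → Prop) (P : K → W → Prop)
    (hfin : ∀ w : W, {v | R w v}.Finite)
    (hΛ : Op.smile ∈ Λ) :
    ∀ w v s : W,
      (∀ φ : Fm K, InLang Λ φ → Sat R P w φ → Sat R P v φ) → R w s →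
      ∃ t, R v t ∧ (∀ φ : Fm K, InLang Λ φ → Sat R P t φ → Sat R P s φ) := by
  intro w v s hS hws
  by_contra h
  push_neg at h
  classical
  -- for each successor t of v choose a formula true at t but false at s
  have hchoice : ∀ t : W, ∃ φ : Fm K,
      (R v t → (InLang Λ φ ∧ Sat R P t φ ∧ ¬ Sat R P s φ)) := by
    intro t
    by_cases ht : R v t
    · obtain ⟨φ, h1, h2, h3⟩ := h t ht
      exact ⟨φ, fun _ => ⟨h1, h2, h3⟩⟩
    · exact ⟨.bot, fun h' => absurd h' ht⟩
  choose f hf using hchoice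
  have hFv : Set.Finite {x | R v x} := hfin v
  let L : List W := hFv.toFinset.toList
  let χ : Fm K := L.foldr (fun t ψ => .or (f t) ψ) .bot
  have hχlang : InLang Λ χ := by
    have : ∀ l : List W, (∀ t ∈ l, R v t) →
        InLang Λ (l.foldr (fun t ψ => .or (f t) ψ) .bot) := by
      intro l
      induction l with
      | nil => intro _; trivial
      | cons a l' ih =>
        intro hl
        exact ⟨(hf a (hl a (by simp))).1, ih fun t ht => hl t (by simp [ht])⟩
    exact this L fun t ht => hFv.mem_toFinset.mp (by simpa [L] using ht)
  -- s refutes χ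
  have hsχ : ¬ Sat R P s χ := by
    have : ∀ l : List W, (∀ t ∈ l, R v t) →
        ¬ Sat R P s (l.foldr (fun t ψ => .or (f t) ψ) .bot) := by
      intro l
      induction l with
      | nil => intro _ hs; exact hs
      | cons a l' ih =>
        intro hl hs
        rcases hs with hs | hs
        · exact (hf a (hl a (by simp))).2.2 hs
        · exact ih (fun t ht => hl t (by simp [ht])) hs
    exact this L fun t ht => hFv.mem_toFinset.mp (by simpa [L] using ht)
  -- so w satisfies smile χ, hence v does
  have hwsm : Sat R P w (.smile χ) := ⟨s, hws, hsχ⟩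
  have hvsm : Sat R P v (.smile χ) := hS _ ⟨hΛ, hχlang⟩ hwsm
  obtain ⟨t, hvt, htχ⟩ := hvsm
  -- but every successor t of v satisfies its disjunct f t, hence χ
  apply htχ
  have hmem : t ∈ L :=
    Finset.mem_toList.mpr (hFv.mem_toFinset.mpr hvt)
  have : ∀ l : List W, t ∈ l →
      Sat R P t (l.foldr (fun t ψ => .or (f t) ψ) .bot) := by
    intro l
    induction l with
    | nil => intro h'; cases h'
    | cons a l' ih =>
      intro hmem
      rcases List.mem_cons.mp hmem with rfl | hmem'
      · exact Or.inl (hf t hvt).2.1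
      · exact Or.inr (ih hmem')
  exact this L hmem
end

section
/- Let M be an image-finite Kripke model with ⌢ in the restorative similarity type Λ. Define S by subsumption in the Λ-language. Then S satisfies (Sim⌢): if S w v and v R t, then there exists s with w R s and S t s. -/
/-!
If no successor of `w` subsumes `t`, choose for each of the finitely many successors `s` of `w` a
Λ-formula true at `t` and false at `s`, and let `ψ` be their conjunction. Then `w ⊩ ⌢ψ`, so
`v ⊩ ⌢ψ` by subsumption, which fails at the successor `t` of `v`.
-/

lemma exists_inLang_sat_forall_not_sat {W K : Type} (Λ : Set Op)
    (R : W → W → Prop) (P : K → W → Prop) {S : Set W} (hS : S.Finite) {t : W}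
    (h : ∀ s ∈ S, ∃ φ : Fm K, InLang Λ φ ∧ Sat R P t φ ∧ ¬ Sat R P s φ) :
    ∃ ψ : Fm K, InLang Λ ψ ∧ Sat R P t ψ ∧ ∀ s ∈ S, ¬ Sat R P s ψ := by
  induction S, hS using Set.Finite.induction_on with
  | empty => exact ⟨.top, trivial, trivial, fun _ hs => hs.elim⟩
  | @insert a S _ _ ih =>
    obtain ⟨φ, hφΛ, hφt, hφa⟩ := h a (Set.mem_insert a S)
    obtain ⟨ψ, hψΛ, hψt, hψS⟩ := ih fun s hs => h s (Set.mem_insert_of_mem a hs)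
    refine ⟨.and φ ψ, ⟨hφΛ, hψΛ⟩, ⟨hφt, hψt⟩, ?_⟩
    rintro s (rfl | hs) ⟨hsφ, hsψ⟩
    exacts [hφa hsφ, hψS s hs hsψ]

theorem stmt13 {W K : Type} (Λ : Set Op)
    (R : W → W → Prop) (P : K → W → Prop)
    (hfin : ∀ w : W, {v | R w v}.Finite)
    (hΛ : Op.frown ∈ Λ) :
    ∀ w v t : W,
      (∀ φ : Fm K, InLang Λ φ → Sat R P w φ → Sat R P v φ) → R v t →
      ∃ s, R w s ∧ (∀ φ : Fm K, InLang Λ φ → Sat R P t φ → Sat R P s φ) := by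
  intro w v t hsub hvt
  by_contra! hsep
  obtain ⟨ψ, hψΛ, hψt, hψw⟩ := exists_inLang_sat_forall_not_sat Λ R P (hfin w) hsep
  exact hsub (.frown ψ) ⟨hΛ, hψΛ⟩ hψw t hvt hψt
end

section
/- Let M be an image-finite Kripke model with °⌣ ∈ Λ. Define S by subsumption in the Λ-language. Then S satisfies (Sim°⌣): if S w v and v R t, then either S v t, or both S v w and there exists s with w R s and S s t. -/
def bigOr {K : Type} : List (Fm K) → Fm K
  | [] => .bot
  | φ :: l => .or φ (bigOr l)

lemma sat_bigOr {W K : Type} (R : W → W → Prop) (P : K → W → Prop) (w : W) :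
    ∀ l : List (Fm K), Sat R P w (bigOr l) ↔ ∃ φ ∈ l, Sat R P w φ
  | [] => by simp [bigOr, Sat]
  | φ :: l => by
    simp [bigOr, Sat, sat_bigOr R P w l]

lemma inLang_bigOr {K : Type} (Λ : Set Op) :
    ∀ l : List (Fm K), (∀ φ ∈ l, InLang Λ φ) → InLang Λ (bigOr l)
  | [] => fun _ => trivial
  | φ :: l => fun h => ⟨h φ (by simp), inLang_bigOr Λ l fun ψ hψ => h ψ (by simp [hψ])⟩

theorem stmt14 {W K : Type} (Λ : Set Op)
    (R : W → W → Prop) (P : K → W → Prop)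
    (hfin : ∀ w : W, {v | R w v}.Finite)
    (hΛ : Op.cons ∈ Λ) :
    ∀ w v t : W,
      (∀ φ : Fm K, InLang Λ φ → Sat R P w φ → Sat R P v φ) → R v t →
      ((∀ φ : Fm K, InLang Λ φ → Sat R P v φ → Sat R P t φ) ∨
        ((∀ φ : Fm K, InLang Λ φ → Sat R P v φ → Sat R P w φ) ∧
          ∃ s, R w s ∧ (∀ φ : Fm K, InLang Λ φ → Sat R P s φ → Sat R P t φ))) := by
  intro w v t hSwv hRvt
  by_cases h1 : ∀ φ : Fm K, InLang Λ φ → Sat R P v φ → Sat R P t φ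
  · exact Or.inl h1
  push_neg at h1
  obtain ⟨φ₀, hL0, hv0, ht0⟩ := h1
  right
  constructor
  · intro ψ hψL hψv
    by_contra hψw
    have hwc : Sat R P w (.cons (.and φ₀ ψ)) := Or.inl (fun h => hψw h.2)
    have hvc := hSwv (.cons (.and φ₀ ψ)) (show InLang Λ (.cons (.and φ₀ ψ)) from ⟨hΛ, hL0, hψL⟩) hwc
    rcases hvc with h | h
    · exact h ⟨hv0, hψv⟩
    · exact ht0 (h t hRvt).1
  · by_contra h
    push_neg at h
    have hch : ∀ s : W, R w s → ∃ χ : Fm K, InLang Λ χ ∧ Sat R P s χ ∧ ¬ Sat R P t χ := by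
      intro s hs
      obtain ⟨χ, hχL, hχs, hχt⟩ := h s hs
      exact ⟨χ, hχL, hχs, hχt⟩
    classical
    choose χ hχ using hch
    set F := (hfin w).toFinset with hF
    set l : List (Fm K) := F.toList.attach.map (fun s =>
      χ s.1 (by simpa [hF] using (Finset.mem_toList.mp s.2))) with hl
    set δ : Fm K := .or φ₀ (bigOr l) with hδ
    have hδL : InLang Λ δ := by
      refine ⟨hL0, inLang_bigOr Λ l ?_⟩
      intro ψ hψ
      simp only [hl, List.mem_map] at hψ
      obtain ⟨s, _, rfl⟩ := hψ
      exact (hχ _ _).1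
    have hwc : Sat R P w (.cons δ) := by
      refine Or.inr (fun u hu => Or.inr ?_)
      rw [sat_bigOr]
      have huF : u ∈ F.toList := Finset.mem_toList.mpr (by simpa [hF] using hu)
      refine ⟨χ u (by simpa [hF] using hu), ?_, (hχ u _).2.1⟩
      simp only [hl, List.mem_map]
      exact ⟨⟨u, huF⟩, List.mem_attach _ _, rfl⟩
    have hvc := hSwv (.cons δ) (show InLang Λ (.cons δ) from ⟨hΛ, hδL⟩) hwc
    rcases hvc with hc | hc
    · exact hc (Or.inl hv0)
    · rcases hc t hRvt with h' | h'
      · exact ht0 h'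
      · rw [sat_bigOr] at h'
        obtain ⟨ψ, hψ, hψt⟩ := h'
        simp only [hl, List.mem_map] at hψ
        obtain ⟨s, _, rfl⟩ := hψ
        exact (hχ _ _).2.2 hψt
end

section
/- Let M be an image-finite Kripke model with ●⌢ ∈ Λ. Define S by subsumption in the Λ-language. Then S satisfies (Sim●⌢): if S w v and w R s, then either S s w, or both S v w and there exists t with v R t and S s t. -/
def conj {K : Type} : List (Fm K) → Fm K
  | [] => .top
  | a :: l => .and a (conj l)

lemma sat_conj {W K : Type} (R : W → W → Prop) (P : K → W → Prop) (w : W) :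
    ∀ l : List (Fm K), Sat R P w (conj l) ↔ ∀ a ∈ l, Sat R P w a
  | [] => by simp [conj, Sat]
  | a :: l => by
    simp [conj, Sat, sat_conj R P w l]

lemma inLang_conj {K : Type} (Λ : Set Op) :
    ∀ l : List (Fm K), (∀ a ∈ l, InLang Λ a) → InLang Λ (conj l)
  | [] => fun _ => trivial
  | a :: l => fun h => ⟨h a (by simp), inLang_conj Λ l fun b hb => h b (by simp [hb])⟩

theorem stmt15 {W K : Type} (Λ : Set Op)
    (R : W → W → Prop) (P : K → W → Prop)
    (hfin : ∀ w : W, {v | R w v}.Finite)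
    (hΛ : Op.undet ∈ Λ) :
    ∀ w v s : W,
      (∀ φ : Fm K, InLang Λ φ → Sat R P w φ → Sat R P v φ) → R w s →
      ((∀ φ : Fm K, InLang Λ φ → Sat R P s φ → Sat R P w φ) ∨
        ((∀ φ : Fm K, InLang Λ φ → Sat R P v φ → Sat R P w φ) ∧
          ∃ t, R v t ∧ (∀ φ : Fm K, InLang Λ φ → Sat R P s φ → Sat R P t φ))) := by
  intro w v s hS hRws
  by_cases hsw : ∀ φ : Fm K, InLang Λ φ → Sat R P s φ → Sat R P w φ
  · exact Or.inl hsw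
  right
  push_neg at hsw
  obtain ⟨φ₀, hφ₀L, hsφ₀, hwφ₀⟩ := hsw
  have hvw : ∀ ψ : Fm K, InLang Λ ψ → Sat R P v ψ → Sat R P w ψ := by
    intro ψ hψL hvψ
    by_contra hwψ
    have hund : Sat R P w (.undet (.or ψ φ₀)) :=
      ⟨fun h => h.elim hwψ hwφ₀, s, hRws, Or.inr hsφ₀⟩
    have := hS (.undet (.or ψ φ₀)) ⟨hΛ, hψL, hφ₀L⟩ hund
    exact this.1 (Or.inl hvψ)
  refine ⟨hvw, ?_⟩
  by_contra hnt
  push_neg at hnt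
  have hchoice : ∀ t : {t // t ∈ (hfin v).toFinset},
      ∃ ψ : Fm K, InLang Λ ψ ∧ Sat R P s ψ ∧ ¬ Sat R P t.1 ψ := by
    rintro ⟨t, ht⟩
    have hRvt : R v t := by simpa using ht
    obtain ⟨ψ, h1, h2, h3⟩ := hnt t hRvt
    exact ⟨ψ, h1, h2, h3⟩
  choose f hf1 hf2 hf3 using hchoice
  set L : List (Fm K) := ((hfin v).toFinset.attach.toList.map f) with hL
  set χ : Fm K := .and φ₀ (conj L) with hχ
  have hχL : InLang Λ χ := by
    refine ⟨hφ₀L, inLang_conj Λ L ?_⟩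
    intro a ha
    simp only [hL, List.mem_map] at ha
    obtain ⟨t, _, rfl⟩ := ha
    exact hf1 t
  have hsχ : Sat R P s χ := by
    refine ⟨hsφ₀, (sat_conj R P s L).2 ?_⟩
    intro a ha
    simp only [hL, List.mem_map] at ha
    obtain ⟨t, _, rfl⟩ := ha
    exact hf2 t
  have hund : Sat R P w (.undet χ) := ⟨fun h => hwφ₀ h.1, s, hRws, hsχ⟩
  obtain ⟨_, t, hRvt, htχ⟩ := hS (.undet χ) ⟨hΛ, hχL⟩ hund
  have htmem : t ∈ (hfin v).toFinset := by simpa using hRvt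
  have : Sat R P t (f ⟨t, htmem⟩) := by
    refine (sat_conj R P t L).1 htχ.2 _ ?_
    simp only [hL, List.mem_map]
    exact ⟨⟨t, htmem⟩, by simp, rfl⟩
  exact hf3 ⟨t, htmem⟩ this
end

section
/- Hennessy–Milner theorem for restorative modal logics on image-finite models: let Λ be a restorative similarity type and M an image-finite Kripke model. Then for all worlds w, v of M: every Λ-language formula true at w is true at v if and only if there exists a Λ-simulation S on M with S w v. -/
/-- The simulation conditions, parametric in the similarity type `Λ`. -/
def SimConds {K Wi Wj : Type} (Λ : Set Op)
    (Ri : Wi → Wi → Prop) (Rj : Wj → Wj → Prop)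
    (Pi : K → Wi → Prop) (Pj : K → Wj → Prop)
    (Sij : Wi → Wj → Prop) (Sji : Wj → Wi → Prop)
    (Sii : Wi → Wi → Prop) (Sjj : Wj → Wj → Prop) : Prop :=
  (∀ k w v, Sij w v → Pi k w → Pj k v) ∧
  (Op.smile ∈ Λ → ∀ w v s, Sij w v → Ri w s → ∃ t, Rj v t ∧ Sji t s) ∧
  (Op.frown ∈ Λ → ∀ w v t, Sij w v → Rj v t → ∃ s, Ri w s ∧ Sji t s) ∧
  (Op.cons ∈ Λ → ∀ w v t, Sij w v → Rj v t →
      (Sjj v t ∨ (Sji v w ∧ ∃ s, Ri w s ∧ Sij s t))) ∧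
  (Op.det ∈ Λ → ∀ w v t, Sij w v → Rj v t →
      (Sjj t v ∨ ∃ s, Ri w s ∧ Sji t s)) ∧
  (Op.incons ∈ Λ → ∀ w v s, Sij w v → Ri w s →
      (Sii w s ∨ ∃ t, Rj v t ∧ Sji t s)) ∧
  (Op.undet ∈ Λ → ∀ w v s, Sij w v → Ri w s →
      (Sii s w ∨ (Sji v w ∧ ∃ t, Rj v t ∧ Sij s t)))

/-- A `Λ`-simulation on a single Kripke model. -/
def IsSim {K W : Type} (Λ : Set Op) (R : W → W → Prop) (P : K → W → Prop)
    (S : W → W → Prop) : Prop :=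
  SimConds Λ R R P P S S S S

/-!
Simulations preserve Λ-formulas, by induction on the formula. Conversely, the relation
"every Λ-formula true at `w` is true at `v`" is itself a Λ-simulation: if one of its clauses
failed, image-finiteness would let finitely many distinguishing formulas be combined by `∧` or
`∨` into a single one which, under the corresponding operator of Λ, holds at `w` but not at `v`.
-/

def TheoryLE {W K : Type} (Λ : Set Op) (R : W → W → Prop) (P : K → W → Prop) (w v : W) :
    Prop :=
  ∀ φ : Fm K, InLang Λ φ → Sat R P w φ → Sat R P v φ

section HennessyMilner

variable {W K : Type} {Λ : Set Op} {R : W → W → Prop} {P : K → W → Prop}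

theorem not_theoryLE {w v : W} :
    ¬ TheoryLE Λ R P w v ↔ ∃ φ : Fm K, InLang Λ φ ∧ Sat R P w φ ∧ ¬ Sat R P v φ := by
  simp [TheoryLE]

theorem IsSim.theoryLE {S : W → W → Prop} (hS : IsSim Λ R P S) {w v : W} (hwv : S w v) :
    TheoryLE Λ R P w v := by
  obtain ⟨hP, hsmile, hfrown, hcons, hdet, hincons, hundet⟩ := hS
  intro φ
  induction φ generalizing w v with
  | prop k => exact fun _ => hP k w v hwv
  | top => exact fun _ _ => trivial
  | bot => exact fun _ => id
  | and a b iha ihb =>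
    rintro ⟨ha, hb⟩ ⟨hwa, hwb⟩
    exact ⟨iha hwv ha hwa, ihb hwv hb hwb⟩
  | or a b iha ihb =>
    rintro ⟨ha, hb⟩ (hwa | hwb)
    exacts [Or.inl (iha hwv ha hwa), Or.inr (ihb hwv hb hwb)]
  | smile a ih =>
    rintro ⟨hm, ha⟩ ⟨s, hws, hsa⟩
    obtain ⟨t, hvt, hts⟩ := hsmile hm w v s hwv hws
    exact ⟨t, hvt, fun hta => hsa (ih hts ha hta)⟩
  | frown a ih =>
    rintro ⟨hm, ha⟩ hw t hvt hta
    obtain ⟨s, hws, hts⟩ := hfrown hm w v t hwv hvt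
    exact hw s hws (ih hts ha hta)
  | cons a ih =>
    rintro ⟨hm, ha⟩ hw
    refine or_iff_not_imp_left.2 fun hva t hvt => ?_
    rcases hcons hm w v t hwv hvt with hvt' | ⟨hvw, s, hws, hst⟩
    · exact ih hvt' ha (not_not.1 hva)
    · rcases hw with hwa | hw
      · exact absurd (ih hvw ha (not_not.1 hva)) hwa
      · exact ih hst ha (hw s hws)
  | det a ih =>
    rintro ⟨hm, ha⟩ hw
    refine or_iff_not_imp_left.2 fun hva t hvt hta => hva ?_
    rcases hdet hm w v t hwv hvt with htv | ⟨s, hws, hts⟩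
    · exact ih htv ha hta
    · rcases hw with hwa | hw
      · exact ih hwv ha hwa
      · exact absurd (ih hts ha hta) (hw s hws)
  | incons a ih =>
    rintro ⟨hm, ha⟩ ⟨hwa, s, hws, hsa⟩
    refine ⟨ih hwv ha hwa, ?_⟩
    rcases hincons hm w v s hwv hws with hws' | ⟨t, hvt, hts⟩
    · exact absurd (ih hws' ha hwa) hsa
    · exact ⟨t, hvt, fun hta => hsa (ih hts ha hta)⟩
  | undet a ih =>
    rintro ⟨hm, ha⟩ ⟨hwa, s, hws, hsa⟩
    rcases hundet hm w v s hwv hws with hsw | ⟨hvw, t, hvt, hst⟩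
    · exact absurd (ih hsw ha hsa) hwa
    · exact ⟨fun hva => hwa (ih hvw ha hva), t, hvt, ih hst ha hsa⟩

theorem exists_fm_forall_sat_of_forall_not_theoryLE {T : Set W} (hT : T.Finite) {s : W}
    (h : ∀ t ∈ T, ¬ TheoryLE Λ R P t s) :
    ∃ φ : Fm K, InLang Λ φ ∧ (∀ t ∈ T, Sat R P t φ) ∧ ¬ Sat R P s φ := by
  induction T, hT using Set.Finite.induction_on with
  | empty => exact ⟨.bot, trivial, fun _ ht => ht.elim, id⟩
  | @insert a T _ _ ih =>
    obtain ⟨α, hα, haα, hsα⟩ := not_theoryLE.1 (h a (Set.mem_insert a T))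
    obtain ⟨ψ, hψ, hTψ, hsψ⟩ := ih fun t ht => h t (Set.mem_insert_of_mem a ht)
    refine ⟨.or α ψ, ⟨hα, hψ⟩, ?_, fun hs => hs.elim hsα hsψ⟩
    rintro t (rfl | ht)
    exacts [Or.inl haα, Or.inr (hTψ t ht)]

theorem exists_fm_forall_not_sat_of_forall_not_theoryLE {T : Set W} (hT : T.Finite) {s : W}
    (h : ∀ t ∈ T, ¬ TheoryLE Λ R P s t) :
    ∃ φ : Fm K, InLang Λ φ ∧ Sat R P s φ ∧ ∀ t ∈ T, ¬ Sat R P t φ := by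
  induction T, hT using Set.Finite.induction_on with
  | empty => exact ⟨.top, trivial, trivial, fun _ ht => ht.elim⟩
  | @insert a T _ _ ih =>
    obtain ⟨α, hα, hsα, haα⟩ := not_theoryLE.1 (h a (Set.mem_insert a T))
    obtain ⟨ψ, hψ, hsψ, hTψ⟩ := ih fun t ht => h t (Set.mem_insert_of_mem a ht)
    refine ⟨.and α ψ, ⟨hα, hψ⟩, ⟨hsα, hsψ⟩, ?_⟩
    rintro t (rfl | ht) htφ
    exacts [haα htφ.1, hTψ t ht htφ.2]

theorem theoryLE_smile (hm : Op.smile ∈ Λ) {w v s : W} (hfin : {t | R v t}.Finite)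
    (hwv : TheoryLE Λ R P w v) (hws : R w s) : ∃ t, R v t ∧ TheoryLE Λ R P t s := by
  by_contra! hcon
  obtain ⟨φ, hφ, hvφ, hsφ⟩ := exists_fm_forall_sat_of_forall_not_theoryLE hfin hcon
  obtain ⟨t, hvt, htφ⟩ := hwv (.smile φ) ⟨hm, hφ⟩ ⟨s, hws, hsφ⟩
  exact htφ (hvφ t hvt)

theorem theoryLE_frown (hm : Op.frown ∈ Λ) {w v t : W} (hfin : {s | R w s}.Finite)
    (hwv : TheoryLE Λ R P w v) (hvt : R v t) : ∃ s, R w s ∧ TheoryLE Λ R P t s := by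
  by_contra! hcon
  obtain ⟨φ, hφ, htφ, hwφ⟩ := exists_fm_forall_not_sat_of_forall_not_theoryLE hfin hcon
  exact hwv (.frown φ) ⟨hm, hφ⟩ hwφ t hvt htφ

theorem theoryLE_cons (hm : Op.cons ∈ Λ) {w v t : W} (hfin : {s | R w s}.Finite)
    (hwv : TheoryLE Λ R P w v) (hvt : R v t) :
    TheoryLE Λ R P v t ∨ (TheoryLE Λ R P v w ∧ ∃ s, R w s ∧ TheoryLE Λ R P s t) := by
  refine or_iff_not_imp_left.2 fun hvt' => ?_
  obtain ⟨α, hα, hvα, htα⟩ := not_theoryLE.1 hvt'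
  refine ⟨fun β hβ hvβ => ?_, ?_⟩
  · by_contra hwβ
    rcases hwv (.cons (.and α β)) ⟨hm, hα, hβ⟩ (Or.inl fun h => hwβ h.2) with h | h
    · exact h ⟨hvα, hvβ⟩
    · exact htα (h t hvt).1
  · by_contra! hcon
    obtain ⟨φ, hφ, hwφ, htφ⟩ := exists_fm_forall_sat_of_forall_not_theoryLE hfin hcon
    rcases hwv (.cons (.or α φ)) ⟨hm, hα, hφ⟩ (Or.inr fun s hws => Or.inr (hwφ s hws)) with
      h | h
    · exact h (Or.inl hvα)
    · exact (h t hvt).elim htα htφ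

theorem theoryLE_det (hm : Op.det ∈ Λ) {w v t : W} (hfin : {s | R w s}.Finite)
    (hwv : TheoryLE Λ R P w v) (hvt : R v t) :
    TheoryLE Λ R P t v ∨ ∃ s, R w s ∧ TheoryLE Λ R P t s := by
  refine or_iff_not_imp_left.2 fun htv => ?_
  obtain ⟨α, hα, htα, hvα⟩ := not_theoryLE.1 htv
  by_contra! hcon
  obtain ⟨φ, hφ, htφ, hwφ⟩ := exists_fm_forall_not_sat_of_forall_not_theoryLE hfin hcon
  rcases hwv (.det (.and α φ)) ⟨hm, hα, hφ⟩ (Or.inr fun s hws h => hwφ s hws h.2) with h | h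
  · exact hvα h.1
  · exact h t hvt ⟨htα, htφ⟩

theorem theoryLE_incons (hm : Op.incons ∈ Λ) {w v s : W} (hfin : {t | R v t}.Finite)
    (hwv : TheoryLE Λ R P w v) (hws : R w s) :
    TheoryLE Λ R P w s ∨ ∃ t, R v t ∧ TheoryLE Λ R P t s := by
  refine or_iff_not_imp_left.2 fun hws' => ?_
  obtain ⟨α, hα, hwα, hsα⟩ := not_theoryLE.1 hws'
  by_contra! hcon
  obtain ⟨φ, hφ, hvφ, hsφ⟩ := exists_fm_forall_sat_of_forall_not_theoryLE hfin hcon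
  obtain ⟨-, t, hvt, htφ⟩ :=
    hwv (.incons (.or α φ)) ⟨hm, hα, hφ⟩ ⟨Or.inl hwα, s, hws, fun h => h.elim hsα hsφ⟩
  exact htφ (Or.inr (hvφ t hvt))

theorem theoryLE_undet (hm : Op.undet ∈ Λ) {w v s : W} (hfin : {t | R v t}.Finite)
    (hwv : TheoryLE Λ R P w v) (hws : R w s) :
    TheoryLE Λ R P s w ∨ (TheoryLE Λ R P v w ∧ ∃ t, R v t ∧ TheoryLE Λ R P s t) := by
  refine or_iff_not_imp_left.2 fun hsw => ?_
  obtain ⟨α, hα, hsα, hwα⟩ := not_theoryLE.1 hsw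
  refine ⟨fun β hβ hvβ => ?_, ?_⟩
  · by_contra hwβ
    exact (hwv (.undet (.or α β)) ⟨hm, hα, hβ⟩
      ⟨fun h => h.elim hwα hwβ, s, hws, Or.inl hsα⟩).1 (Or.inr hvβ)
  · by_contra! hcon
    obtain ⟨φ, hφ, hsφ, hvφ⟩ := exists_fm_forall_not_sat_of_forall_not_theoryLE hfin hcon
    obtain ⟨-, t, hvt, htφ⟩ :=
      hwv (.undet (.and α φ)) ⟨hm, hα, hφ⟩ ⟨fun h => hwα h.1, s, hws, hsα, hsφ⟩
    exact hvφ t hvt htφ.2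

theorem isSim_theoryLE (hfin : ∀ w : W, {v | R w v}.Finite) :
    IsSim Λ R P (TheoryLE Λ R P) :=
  ⟨fun k _ _ hwv hk => hwv (.prop k) trivial hk,
    fun hm _ _ _ hwv hws => theoryLE_smile hm (hfin _) hwv hws,
    fun hm _ _ _ hwv hvt => theoryLE_frown hm (hfin _) hwv hvt,
    fun hm _ _ _ hwv hvt => theoryLE_cons hm (hfin _) hwv hvt,
    fun hm _ _ _ hwv hvt => theoryLE_det hm (hfin _) hwv hvt,
    fun hm _ _ _ hwv hws => theoryLE_incons hm (hfin _) hwv hws,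
    fun hm _ _ _ hwv hws => theoryLE_undet hm (hfin _) hwv hws⟩

end HennessyMilner

theorem stmt16 {W K : Type} (Λ : Set Op)
    (R : W → W → Prop) (P : K → W → Prop)
    (hfin : ∀ w : W, {v | R w v}.Finite) :
    ∀ w v : W,
      (∀ φ : Fm K, InLang Λ φ → Sat R P w φ → Sat R P v φ) ↔
      (∃ S : W → W → Prop, IsSim Λ R P S ∧ S w v) :=
  fun _ _ => ⟨fun h => ⟨TheoryLE Λ R P, isSim_theoryLE hfin, h⟩,
    fun ⟨_, hS, hwv⟩ => hS.theoryLE hwv⟩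
end
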